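/- arXiv:1110.1950 — 3 statements merged into one kernel-verified Lean document; each statement's English description precedes it below -/
import Mathlib

section
/- The analogous Craig lattice A_n^{(m,l)}, defined as the set of integer polynomials f of degree at most n with f(1)=0 and f^{(i)}(1) ≡ 0 mod l for i=1,...,m-1 (identified with their coefficient vectors in Z^{n+1}), is a sublattice of index l^{m-1} in the root lattice A_n = {(v_0,...,v_n) ∈ Z^{n+1} : v_0+...+v_n = 0}, and hence has rank n and volume (determinant^{1/2}) equal to l^{m-1}(n+1)^{1/2}. -/
open Finset

/-- The linear functional sending the coefficient vector of `f = a_0 + a_1 x + ... + a_n x^n`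
to the `i`-th derivative of `f` evaluated at `1`, i.e. `∑ a_j · j(j-1)⋯(j-i+1)`. -/
noncomputable def derAt1 (n i : ℕ) : (Fin (n + 1) → ℤ) →ₗ[ℤ] ℤ :=
  ∑ j : Fin (n + 1), (((j : ℕ).descFactorial i : ℤ)) • LinearMap.proj j

/-- The analogous Craig lattice `A_n^{(m,l)}`: coefficient vectors of integer polynomials `f`
of degree at most `n` with `f(1) = 0` and `f^{(i)}(1) ≡ 0 mod l` for `i = 1, ..., m-1`. -/
noncomputable def craigLat (n m l : ℕ) : Submodule ℤ (Fin (n + 1) → ℤ) :=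
  LinearMap.ker (derAt1 n 0) ⊓
    ⨅ i ∈ Finset.Ioo 0 m, Submodule.comap (derAt1 n i) (Ideal.span {(l : ℤ)})

/-- The root lattice `A_n = {v ∈ ℤ^{n+1} : ∑ v_i = 0}`. -/
noncomputable def rootLat (n : ℕ) : Submodule ℤ (Fin (n + 1) → ℤ) :=
  LinearMap.ker (derAt1 n 0)

/-!
Reducing the derivatives of orders `1, …, m-1` at `1` modulo `l` gives a homomorphism from `A_n`
to `(ℤ/l)^{m-1}` whose kernel is `A_n^{(m,l)}`. It is onto: on the vectors `x^j - 1`,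
`j = 1, …, m-1`, of `A_n` it is given by the upper triangular matrix of descending factorials
`j(j-1)⋯(j-i+1)`, whose diagonal entries `i!` are units mod `l` because `l > m - 1` is prime.
So the index is `l^{m-1}`. The rank is `n` because `l • A_n ≤ A_n^{(m,l)} ≤ A_n`.
-/

open Nat

lemma AddSubgroup.index_inf_ker_addSubgroupOf {G A : Type*} [AddGroup G] [AddGroup A]
    (K : AddSubgroup G) (f : G →+ A) (hf : K.map f = ⊤) :
    ((K ⊓ f.ker).addSubgroupOf K).index = Nat.card A := by
  rw [AddSubgroup.inf_addSubgroupOf_left, ← AddMonoidHom.ker_domRestrict, AddSubgroup.index_ker,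
    AddMonoidHom.domRestrict_range, hf, AddSubgroup.card_top]

lemma Submodule.finrank_eq_of_smul_le {R M : Type*} [CommRing R] [IsDomain R] [AddCommGroup M]
    [Module R M] [Module.IsTorsionFree R M] [IsNoetherianRing R] [Module.Finite R M]
    {p q : Submodule R M} (hqp : q ≤ p) {a : R} (ha : a ≠ 0)
    (hpq : p.map (a • LinearMap.id) ≤ q) :
    Module.finrank R q = Module.finrank R p := by
  have hinj : Function.Injective (a • LinearMap.id : M →ₗ[R] M) := smul_right_injective M ha
  refine le_antisymm (Submodule.finrank_mono hqp) ?_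
  calc Module.finrank R p = Module.finrank R (p.map (a • LinearMap.id)) :=
        (Submodule.equivMapOfInjective _ hinj p).finrank_eq
    _ ≤ Module.finrank R q := Submodule.finrank_mono hpq

lemma Matrix.isUnit_descFactorial {R : Type*} [CommRing R] (N : ℕ) (h : IsUnit (N ! : R)) :
    IsUnit (Matrix.of fun k k' : Fin N => (((k' + 1 : ℕ).descFactorial (k + 1) : ℕ) : R)) := by
  have hupper : (Matrix.of fun k k' : Fin N =>
      (((k' + 1 : ℕ).descFactorial (k + 1) : ℕ) : R)).IsUpperTriangular := fun k k' hlt => by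
    rw [Matrix.of_apply, Nat.descFactorial_of_lt (by simpa using hlt), Nat.cast_zero]
  rw [Matrix.isUnit_iff_isUnit_det, Matrix.det_of_isUpperTriangular hupper, IsUnit.prod_univ_iff]
  intro k
  refine isUnit_of_dvd_unit ?_ h
  rw [Matrix.of_apply, Nat.descFactorial_self]
  exact Nat.cast_dvd_cast (Nat.factorial_dvd_factorial k.isLt)

lemma derAt1_apply (n i : ℕ) (v : Fin (n + 1) → ℤ) :
    derAt1 n i v = ∑ j : Fin (n + 1), ((j : ℕ).descFactorial i : ℤ) * v j := by
  simp [derAt1]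

lemma derAt1_single (n i : ℕ) (j : Fin (n + 1)) (a : ℤ) :
    derAt1 n i (Pi.single j a) = (j : ℕ).descFactorial i * a := by
  simp [derAt1_apply, Pi.single_apply]

lemma mem_craigLat (n m l : ℕ) (v : Fin (n + 1) → ℤ) :
    v ∈ craigLat n m l ↔ v ∈ rootLat n ∧ ∀ i ∈ Ioo 0 m, (l : ℤ) ∣ derAt1 n i v := by
  simp [craigLat, rootLat, Submodule.mem_iInf, Ideal.mem_span_singleton]

lemma craigLat_le_rootLat (n m l : ℕ) : craigLat n m l ≤ rootLat n := inf_le_left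

lemma finrank_rootLat (n : ℕ) : Module.finrank ℤ (rootLat n) = n := by
  have hsurj : Function.Surjective (derAt1 n 0) := fun a =>
    ⟨Pi.single 0 a, by simp [derAt1_single]⟩
  have := (rootLat n).finrank_quotient_add_finrank
  rw [rootLat, ((derAt1 n 0).quotKerEquivOfSurjective hsurj).finrank_eq] at this
  rw [rootLat]
  simp only [Module.finrank_self, Module.finrank_fin_fun] at this
  omega

lemma smul_rootLat_le_craigLat (n m l : ℕ) :
    (rootLat n).map ((l : ℤ) • LinearMap.id) ≤ craigLat n m l := by
  rintro _ ⟨v, hv, rfl⟩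
  refine (mem_craigLat n m l _).2 ⟨(rootLat n).smul_mem _ hv, fun i _ => ?_⟩
  rw [LinearMap.smul_apply, LinearMap.id_apply, map_smul]
  exact dvd_mul_right _ _

noncomputable def derivResidues (n m l : ℕ) :
    (Fin (n + 1) → ℤ) →+ (Fin (m - 1) → ZMod l) where
  toFun v k := (derAt1 n (k + 1) v : ZMod l)
  map_zero' := by ext; simp
  map_add' v w := by ext; simp

lemma craigLat_toAddSubgroup (n m l : ℕ) :
    (craigLat n m l).toAddSubgroup = (rootLat n).toAddSubgroup ⊓ (derivResidues n m l).ker := by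
  ext v
  rw [Submodule.mem_toAddSubgroup, mem_craigLat, AddSubgroup.mem_inf, AddMonoidHom.mem_ker,
    Submodule.mem_toAddSubgroup, funext_iff]
  refine and_congr_right fun _ => ⟨fun h k => ?_, fun h i hi => ?_⟩
  · exact (ZMod.intCast_zmod_eq_zero_iff_dvd _ _).2 (h _ (by simp; omega))
  · obtain ⟨k, rfl⟩ : ∃ k, i = k + 1 := Nat.exists_eq_add_one.2 (mem_Ioo.1 hi).1
    exact (ZMod.intCast_zmod_eq_zero_iff_dvd _ _).1 (h ⟨k, by simp at hi; omega⟩)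

lemma exists_mem_rootLat_derivResidues_eq (n m l : ℕ) (hmn : m ≤ n + 1)
    (hl : (m - 1)!.Coprime l) (t : Fin (m - 1) → ZMod l) :
    ∃ v ∈ rootLat n, derivResidues n m l v = t := by
  obtain ⟨c, rfl⟩ := Matrix.mulVec_surjective_iff_isUnit.2
    (Matrix.isUnit_descFactorial (m - 1) ((ZMod.isUnit_iff_coprime _ l).2 hl)) t
  let v : Fin (n + 1) → ℤ := ∑ k : Fin (m - 1),
    (Pi.single ⟨k + 1, by omega⟩ (c k).cast - Pi.single 0 (c k).cast)
  refine ⟨v, ?_, ?_⟩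
  · simp [v, rootLat, derAt1_single]
  · ext k
    simp [v, derivResidues, derAt1_single, Matrix.mulVec, dotProduct, mul_comm]

theorem craigLat_index (n m l : ℕ) (hmn : m ≤ n + 1) (hl : (m - 1)!.Coprime l) :
    (((craigLat n m l).toAddSubgroup).addSubgroupOf ((rootLat n).toAddSubgroup)).index
      = l ^ (m - 1) := by
  rw [craigLat_toAddSubgroup, AddSubgroup.index_inf_ker_addSubgroupOf, Nat.card_pi]
  · simp [Nat.card_zmod]
  · refine eq_top_iff.2 fun t _ => ?_
    obtain ⟨v, hv, rfl⟩ := exists_mem_rootLat_derivResidues_eq n m l hmn hl t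
    exact ⟨v, hv, rfl⟩

theorem finrank_craigLat (n m l : ℕ) (hl : l ≠ 0) :
    Module.finrank ℤ (craigLat n m l) = n := by
  rw [Submodule.finrank_eq_of_smul_le (craigLat_le_rootLat n m l) (Int.natCast_ne_zero.2 hl)
    (smul_rootLat_le_craigLat n m l), finrank_rootLat]

theorem craig_index_in_root_general (n m l : ℕ) (hmn : 2 * m < n)
    (hl : n + 1 ≤ l) (hlp : l.Prime) :
    craigLat n m l ≤ rootLat n ∧
    (((craigLat n m l).toAddSubgroup).addSubgroupOf ((rootLat n).toAddSubgroup)).index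
      = l ^ (m - 1) ∧
    Module.finrank ℤ (craigLat n m l) = n := by
  have hcop : (m - 1)!.Coprime l := (hlp.coprime_factorial_of_lt (by omega)).symm
  exact ⟨craigLat_le_rootLat n m l, craigLat_index n m l (by omega) hcop,
    finrank_craigLat n m l hlp.ne_zero⟩

/-- `A_n^{(m,l)}` is a sublattice of index `l^{m-1}` in the root lattice `A_n`,
hence it has rank `n` (its volume is therefore `l^{m-1}(n+1)^{1/2}`). -/
theorem craig_index_in_root (n m l : ℕ) (hm : 0 < m) (hmn : 2 * m < n)
    (hl : n + 1 ≤ l) (hlp : l.Prime) :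
    craigLat n m l ≤ rootLat n ∧
    (((craigLat n m l).toAddSubgroup).addSubgroupOf ((rootLat n).toAddSubgroup)).index
      = l ^ (m - 1) ∧
    Module.finrank ℤ (craigLat n m l) = n :=
  craig_index_in_root_general n m l hmn hl hlp
end

section
/- For all integers n ≥ 1 and 0 ≤ r ≤ n/2, the sum Σ_{i=0}^{r} C(n,i) is at most 2^{n·H(r/n)}, where H(x) = -x log_2 x - (1-x) log_2 (1-x) is the binary entropy function (with H(0) = 0). -/
open Finset

/-- The binary entropy function `H(x) = -x log₂ x - (1-x) log₂ (1-x)` (with `H(0) = 0`,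
since `Real.log 0 = 0` in Mathlib). -/
noncomputable def binEnt (x : ℝ) : ℝ :=
  -x * Real.logb 2 x - (1 - x) * Real.logb 2 (1 - x)

/-! With `p = r / n ≤ 1/2`, each binomial term `C(n,i) pⁱ (1-p)ⁿ⁻ⁱ` with `i ≤ r` is at least
`C(n,i) pʳ (1-p)ⁿ⁻ʳ`, and all binomial terms add up to `(p + (1-p))ⁿ = 1`. Hence the ball volume
is at most `(pʳ (1-p)ⁿ⁻ʳ)⁻¹`, which is exactly `2^{n H(p)}`. -/

section Binomial

variable {R : Type*} [CommRing R] [LinearOrder R] [IsStrictOrderedRing R]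

theorem pow_mul_pow_sub_le_pow_mul_pow_sub {a b : R} (ha : 0 ≤ a) (hab : a ≤ b) {i r n : ℕ}
    (hir : i ≤ r) (hrn : r ≤ n) : a ^ r * b ^ (n - r) ≤ a ^ i * b ^ (n - i) := by
  have hb : 0 ≤ b := ha.trans hab
  calc a ^ r * b ^ (n - r) = a ^ i * a ^ (r - i) * b ^ (n - r) := by
        rw [← pow_add, Nat.add_sub_cancel' hir]
    _ ≤ a ^ i * b ^ (r - i) * b ^ (n - r) := by gcongr
    _ = a ^ i * b ^ (n - i) := by
        rw [mul_assoc, ← pow_add]; congr 2; omega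

theorem sum_range_choose_mul_pow_mul_pow_sub_le_one {p : R} (hp : 0 ≤ p) (hp_le : p ≤ 1 - p)
    {r n : ℕ} (hrn : r ≤ n) :
    (∑ i ∈ range (r + 1), (n.choose i : R)) * (p ^ r * (1 - p) ^ (n - r)) ≤ 1 := by
  have hq : 0 ≤ 1 - p := hp.trans hp_le
  calc (∑ i ∈ range (r + 1), (n.choose i : R)) * (p ^ r * (1 - p) ^ (n - r))
      ≤ ∑ i ∈ range (r + 1), p ^ i * (1 - p) ^ (n - i) * n.choose i := by
        rw [sum_mul]
        refine sum_le_sum fun i hi ↦ ?_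
        rw [mul_comm]
        exact mul_le_mul_of_nonneg_right (pow_mul_pow_sub_le_pow_mul_pow_sub hp hp_le
          (Nat.lt_succ_iff.mp (mem_range.mp hi)) hrn) (Nat.cast_nonneg _)
    _ ≤ ∑ i ∈ range (n + 1), p ^ i * (1 - p) ^ (n - i) * n.choose i :=
        sum_le_sum_of_subset_of_nonneg (range_subset_range.mpr (by omega))
          fun _ _ _ ↦ by positivity
    _ = 1 := by rw [← add_pow, add_sub_cancel, one_pow]

end Binomial

theorem two_rpow_mul_binEnt {p : ℝ} (hp0 : 0 < p) (hp1 : p < 1) (t : ℝ) :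
    (2 : ℝ) ^ (t * binEnt p) = (p ^ (t * p) * (1 - p) ^ (t * (1 - p)))⁻¹ := by
  have hpow (x s : ℝ) (hx : 0 < x) : x ^ s = (2 : ℝ) ^ (Real.logb 2 x * s) := by
    rw [Real.rpow_mul zero_le_two, Real.rpow_logb zero_lt_two (by norm_num) hx]
  rw [hpow p _ hp0, hpow (1 - p) _ (by linarith), ← Real.rpow_add zero_lt_two,
    ← Real.rpow_neg zero_le_two, binEnt]
  ring_nf

theorem hamming_ball_entropy_bound_general (n r : ℕ) (hr : 2 * r ≤ n) :
    (∑ i ∈ Finset.range (r + 1), (n.choose i : ℝ))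
      ≤ (2 : ℝ) ^ ((n : ℝ) * binEnt ((r : ℝ) / (n : ℝ))) := by
  obtain rfl | hr0 := Nat.eq_zero_or_pos r
  · simp [binEnt]
  have hn : (0 : ℝ) < n := by exact_mod_cast (by omega : 0 < n)
  have hr2 : (2 * r : ℝ) ≤ n := by exact_mod_cast hr
  set p : ℝ := r / n with hp
  have hp0 : 0 < p := by positivity
  have hp_half : p ≤ 1 - p := by rw [hp, le_sub_iff_add_le, ← add_div, div_le_one hn]; linarith
  have hnp : (n : ℝ) * p = r := by rw [hp]; field_simp
  have hnq : (n : ℝ) * (1 - p) = (n - r : ℕ) := by rw [Nat.cast_sub (by omega), ← hnp]; ring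
  have hmass : 0 < p ^ r * (1 - p) ^ (n - r) := by have := hp0.trans_le hp_half; positivity
  rw [two_rpow_mul_binEnt hp0 (by linarith), hnp, hnq, Real.rpow_natCast, Real.rpow_natCast,
    ← one_div, le_div_iff₀ hmass]
  exact sum_range_choose_mul_pow_mul_pow_sub_le_one hp0.le hp_half (by omega)

/-- Entropy bound on the volume of a Hamming ball: for `n ≥ 1` and `r ≤ n/2`,
`∑_{i=0}^{r} C(n,i) ≤ 2^{n·H(r/n)}`. -/
theorem hamming_ball_entropy_bound (n r : ℕ) (hn : 1 ≤ n) (hr : 2 * r ≤ n) :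
    (∑ i ∈ Finset.range (r + 1), (n.choose i : ℝ))
      ≤ (2 : ℝ) ^ ((n : ℝ) * binEnt ((r : ℝ) / (n : ℝ))) :=
  hamming_ball_entropy_bound_general n r hr
end

section
/- Let p be a prime with p ≡ 5 (mod 6) and 1667 ≤ p ≤ 2039, let n = 2p-2, m = ⌊(p-1)/16⌋, and let l be a prime with 2p < l < 2^{1.001}·p. Then 2^{⌊0.3776(p-1)⌋} · ⌊(p-1)/32⌋^{p-1} / l^{m - 1/2} > ((p+1)/12)^{p-1} / p^{(p-5)/6}, i.e., the center density of the lattice obtained from the analogous Craig lattice A_{2p-2}^{(m,l)} together with a binary linear [2p-2, ⌊0.3776(p-1)⌋, (p-1)/2] code exceeds the center density of the Mordell–Weil lattice of dimension 2p-2. -/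
/-!
Since `2p < l < 2^{1.001} p ≤ 2.0014 p`, the factor `l^{m-1/2}` is at most `(2.0014 p)^m / s` with
`s = ⌊√(2p)⌋`. After clearing denominators this leaves an inequality between natural numbers
depending on `p` alone, which the kernel checks for every `p ≡ 5 (mod 6)` in the range except
those with a factor at most `45`; these are not prime, and for some of them (e.g. `p = 1691`)
the inequality is false.
-/

open Real

lemma two_rpow_one_point_001_le : (2 : ℝ) ^ (1.001 : ℝ) ≤ 20014 / 10000 := by
  have hpow : ((2 : ℝ) ^ (1.001 : ℝ)) ^ (1000 : ℕ) ≤ (20014 / 10000 : ℝ) ^ (1000 : ℕ) := by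
    rw [← rpow_natCast, ← rpow_mul (by norm_num),
      show (1.001 : ℝ) * (1000 : ℕ) = (1001 : ℕ) by norm_num, rpow_natCast, div_pow,
      le_div_iff₀ (by positivity)]
    exact_mod_cast (by decide +kernel : 2 ^ 1001 * 10000 ^ 1000 ≤ 20014 ^ 1000)
  exact le_of_pow_le_pow_left₀ (by norm_num) (by norm_num) hpow

lemma rpow_natCast_sub_half_le {l b s : ℝ} (m : ℕ) (hs : 0 < s) (hsl : s ^ 2 ≤ l)
    (hlb : l ≤ b) : l ^ ((m : ℝ) - 1 / 2) ≤ b ^ m / s := by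
  have hl : 0 < l := (pow_pos hs 2).trans_le hsl
  have hs_le_sqrt : s ≤ √l := le_sqrt_of_sq_le hsl
  rw [rpow_sub hl, rpow_natCast, ← sqrt_eq_rpow]
  exact div_le_div₀ (pow_nonneg (hl.le.trans hlb) m) (pow_le_pow_left₀ hl.le hlb m) hs hs_le_sqrt

lemma natCast_div_six_of_mod_six {p : ℕ} (hp : p % 6 = 5) :
    ((p : ℝ) - 5) / 6 = ((p - 5) / 6 : ℕ) := by
  obtain ⟨e, rfl⟩ : ∃ e, p = 6 * e + 5 := ⟨p / 6, by omega⟩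
  rw [show (6 * e + 5 - 5) / 6 = e by omega]
  push_cast
  ring

lemma div_le_floor_mul {p : ℕ} (hp : 1 ≤ p) :
    3776 * (p - 1) / 10000 ≤ ⌊(0.3776 : ℝ) * ((p : ℝ) - 1)⌋₊ := by
  apply Nat.le_floor
  calc ((3776 * (p - 1) / 10000 : ℕ) : ℝ) ≤ ((3776 * (p - 1) : ℕ) : ℝ) / 10000 :=
        Nat.cast_div_le
    _ = (0.3776 : ℝ) * ((p : ℝ) - 1) := by
        rw [Nat.cast_mul, Nat.cast_sub hp]
        push_cast
        ring

/-- The theorem with `l^{m-1/2}` bounded by `(2.0014 p)^m / s`, multiplied out over `ℕ`. -/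
def CraigNatBound (p s : ℕ) : Prop :=
  (p + 1) ^ (p - 1) * (20014 * p) ^ ((p - 1) / 16)
    < 2 ^ (3776 * (p - 1) / 10000) * ((p - 1) / 32) ^ (p - 1) * p ^ ((p - 5) / 6) * s
      * (12 ^ (p - 1) * 10000 ^ ((p - 1) / 16))

instance (p s : ℕ) : Decidable (CraigNatBound p s) :=
  inferInstanceAs (Decidable (_ < _))

lemma CraigNatBound.real {p s : ℕ} (h : CraigNatBound p s) :
    (((p : ℝ) + 1) / 12) ^ (p - 1) * (20014 / 10000 * (p : ℝ)) ^ ((p - 1) / 16)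
      < 2 ^ (3776 * (p - 1) / 10000) * (((p - 1) / 32 : ℕ) : ℝ) ^ (p - 1)
        * (p : ℝ) ^ ((p - 5) / 6) * s := by
  have hreal := (Nat.cast_lt (α := ℝ)).mpr h
  push_cast at hreal
  have hlhs : (((p : ℝ) + 1) / 12) ^ (p - 1) * (20014 / 10000 * (p : ℝ)) ^ ((p - 1) / 16)
      = (p + 1) ^ (p - 1) * (20014 * p) ^ ((p - 1) / 16)
        / (12 ^ (p - 1) * 10000 ^ ((p - 1) / 16)) := by
    rw [div_pow, div_mul_eq_mul_div, mul_pow, div_pow, mul_pow]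
    field_simp
  rw [hlhs, div_lt_iff₀ (by positivity)]
  exact hreal

lemma CraigNatBound.pos {p s : ℕ} (h : CraigNatBound p s) : 0 < s := by
  rw [Nat.pos_iff_ne_zero]
  rintro rfl
  simp [CraigNatBound] at h

lemma craigNatBound_or_small_factor :
    ∀ p ∈ Finset.Icc 1667 2039, p % 6 = 5 →
      CraigNatBound p (Nat.sqrt (2 * p)) ∨ ∃ d ∈ Finset.Icc 2 45, d ∣ p := by
  decide +kernel

lemma craig_density_gt_of_natBound {p l s : ℕ} (hp : 1 ≤ p) (hpm : p % 6 = 5)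
    (hl1 : 2 * p < l) (hl2 : (l : ℝ) ≤ 20014 / 10000 * p) (hs : s ^ 2 ≤ 2 * p)
    (h : CraigNatBound p s) :
    (2 : ℝ) ^ (⌊(0.3776 : ℝ) * ((p : ℝ) - 1)⌋₊) * (((p - 1) / 32 : ℕ) : ℝ) ^ (p - 1)
        / (l : ℝ) ^ ((((p - 1) / 16 : ℕ) : ℝ) - 1 / 2)
      > (((p : ℝ) + 1) / 12) ^ (p - 1) / (p : ℝ) ^ (((p : ℝ) - 5) / 6) := by
  have hs0 : (0 : ℝ) < s := by exact_mod_cast h.pos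
  have hsl : (s : ℝ) ^ 2 ≤ l := by exact_mod_cast hs.trans hl1.le
  have hl0 : (0 : ℝ) < l := (pow_pos hs0 2).trans_le hsl
  rw [natCast_div_six_of_mod_six hpm, rpow_natCast, gt_iff_lt,
    div_lt_div_iff₀ (by positivity) (rpow_pos_of_pos hl0 _)]
  calc (((p : ℝ) + 1) / 12) ^ (p - 1) * (l : ℝ) ^ ((((p - 1) / 16 : ℕ) : ℝ) - 1 / 2)
      ≤ (((p : ℝ) + 1) / 12) ^ (p - 1) * ((20014 / 10000 * (p : ℝ)) ^ ((p - 1) / 16) / s) := by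
        gcongr
        exact rpow_natCast_sub_half_le _ hs0 hsl hl2
    _ < 2 ^ (3776 * (p - 1) / 10000) * (((p - 1) / 32 : ℕ) : ℝ) ^ (p - 1)
          * (p : ℝ) ^ ((p - 5) / 6) := by
        rw [mul_div_assoc', div_lt_iff₀ hs0]
        exact h.real
    _ ≤ 2 ^ (⌊(0.3776 : ℝ) * ((p : ℝ) - 1)⌋₊) * (((p - 1) / 32 : ℕ) : ℝ) ^ (p - 1)
          * (p : ℝ) ^ ((p - 5) / 6) := by
        gcongr
        · norm_num
        · exact div_le_floor_mul hp

theorem beats_mordell_weil_general (p l : ℕ) (hp : p.Prime) (hpm : p % 6 = 5)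
    (h1 : 1667 ≤ p) (h2 : p ≤ 2039)
    (hl1 : 2 * p < l) (hl2 : (l : ℝ) < (2 : ℝ) ^ ((1.001 : ℝ)) * (p : ℝ)) :
    (2 : ℝ) ^ (⌊(0.3776 : ℝ) * ((p : ℝ) - 1)⌋₊) * (((p - 1) / 32 : ℕ) : ℝ) ^ (p - 1)
        / (l : ℝ) ^ ((((p - 1) / 16 : ℕ) : ℝ) - 1 / 2)
      > (((p : ℝ) + 1) / 12) ^ (p - 1) / (p : ℝ) ^ (((p : ℝ) - 5) / 6) := by
  have hl2' : (l : ℝ) ≤ 20014 / 10000 * p :=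
    hl2.le.trans (mul_le_mul_of_nonneg_right two_rpow_one_point_001_le (Nat.cast_nonneg p))
  rcases craigNatBound_or_small_factor p (Finset.mem_Icc.mpr ⟨h1, h2⟩) hpm with
    hbound | ⟨d, hd, hdp⟩
  · exact craig_density_gt_of_natBound (by omega) hpm hl1 hl2' (Nat.sqrt_le' _) hbound
  · rw [Finset.mem_Icc] at hd
    rcases hp.eq_one_or_self_of_dvd d hdp with rfl | rfl <;> omega

/-- For a prime `p ≡ 5 (mod 6)` with `1667 ≤ p ≤ 2039`, `m = ⌊(p-1)/16⌋`, and a prime `l`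
with `2p < l < 2^{1.001} p`, the center density
`2^{⌊0.3776(p-1)⌋} ⌊(p-1)/32⌋^{p-1} / l^{m-1/2}` of the lattice built from the analogous
Craig lattice `A_{2p-2}^{(m,l)}` and a binary `[2p-2, ⌊0.3776(p-1)⌋, (p-1)/2]` code
exceeds the center density `((p+1)/12)^{p-1} / p^{(p-5)/6}` of the Mordell–Weil lattice
of dimension `2p-2`. -/
theorem beats_mordell_weil (p l : ℕ) (hp : p.Prime) (hpm : p % 6 = 5)
    (h1 : 1667 ≤ p) (h2 : p ≤ 2039)
    (hl : l.Prime) (hl1 : 2 * p < l) (hl2 : (l : ℝ) < (2 : ℝ) ^ ((1.001 : ℝ)) * (p : ℝ)) :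
    (2 : ℝ) ^ (⌊(0.3776 : ℝ) * ((p : ℝ) - 1)⌋₊) * (((p - 1) / 32 : ℕ) : ℝ) ^ (p - 1)
        / (l : ℝ) ^ ((((p - 1) / 16 : ℕ) : ℝ) - 1 / 2)
      > (((p : ℝ) + 1) / 12) ^ (p - 1) / (p : ℝ) ^ (((p : ℝ) - 5) / 6) :=
  beats_mordell_weil_general p l hp hpm h1 h2 hl1 hl2
end
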